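/- arXiv:1903.06456 — 4 statements merged into one kernel-verified Lean document; each statement's English description precedes it below -/
import Mathlib

section
/- Let F be the field ℝ or ℂ and let X be a normed F-vector space whose algebraic dimension equals 2^κ for some infinite cardinal κ. Then the completion of X has the same algebraic dimension as X. -/
/-!
The completion contains `X` and is the set of limits of sequences in `X`, so
`dim X ≤ dim X̂ ≤ #X̂ ≤ #X ^ ℵ₀`. Since `#F ≤ 𝔠 ≤ 2 ^ κ = dim X`, a Hamel basis shows
`#X = dim X`, and `(2 ^ κ) ^ ℵ₀ = 2 ^ (κ * ℵ₀) = 2 ^ κ` closes the chain.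
-/

open Cardinal Filter Topology

universe u

theorem RCLike.mk_le_continuum (K : Type*) [RCLike K] : #K ≤ 𝔠 := by
  have hinj : Function.Injective fun z : K => (RCLike.re z, RCLike.im z) :=
    fun _ _ h => RCLike.ext (Prod.ext_iff.mp h).1 (Prod.ext_iff.mp h).2
  simpa [mk_real, continuum_mul_self] using lift_mk_le_lift_mk_of_injective hinj

theorem Module.rank_eq_mk_of_aleph0_le_of_mk_le {R M : Type u} [Ring R] [StrongRankCondition R]
    [AddCommGroup M] [Module R M] [Module.Free R M] (h₀ : ℵ₀ ≤ Module.rank R M)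
    (hR : #R ≤ Module.rank R M) : Module.rank R M = #M := by
  let b := Module.Free.chooseBasis R M
  have hι : #(Module.Free.ChooseBasisIndex R M) = Module.rank R M := b.mk_eq_rank''
  have : Nontrivial R := nontrivial_of_invariantBasisNumber R
  have : Infinite (Module.Free.ChooseBasisIndex R M) := infinite_iff.mpr (hι ▸ h₀)
  rw [mk_congr b.repr.toEquiv, mk_finsupp_of_infinite, hι, max_eq_left hR]

theorem mk_le_mk_pow_aleph0_of_denseRange {X Y : Type u} [TopologicalSpace Y]
    [FrechetUrysohnSpace Y] [T2Space Y] {f : X → Y} (hf : DenseRange f) :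
    #Y ≤ #X ^ ℵ₀ := by
  have hseq (y : Y) : ∃ u : ℕ → X, Tendsto (f ∘ u) atTop (𝓝 y) := by
    obtain ⟨v, hv, hlim⟩ := mem_closure_iff_seq_limit.mp (hf y)
    choose u hu using hv
    exact ⟨u, by simpa [Function.comp_def, hu] using hlim⟩
  choose u hu using hseq
  have hinj : Function.Injective u := fun y z h => tendsto_nhds_unique (hu y) (h ▸ hu z)
  simpa [mk_arrow] using lift_mk_le_lift_mk_of_injective hinj

theorem UniformSpace.Completion.rank_le_rank_completion (R α : Type*) [Ring R] [UniformSpace α]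
    [AddCommGroup α] [IsUniformAddGroup α] [Module R α] [UniformContinuousConstSMul R α]
    [T0Space α] : Module.rank R α ≤ Module.rank R (Completion α) :=
  LinearMap.rank_le_of_injective { toCompl with map_smul' := coe_smul } (coe_injective α)

/-- If `X` is a normed space over `F ∈ {ℝ, ℂ}` whose algebraic dimension
equals `2 ^ κ` for some infinite cardinal `κ`, then the completion of `X` has the same
algebraic dimension as `X`. -/
theorem stmt3 (F : Type) [RCLike F] (X : Type) [NormedAddCommGroup X] [NormedSpace F X]
    (κ : Cardinal) (hκ : ℵ₀ ≤ κ) (h : Module.rank F X = 2 ^ κ) :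
    Module.rank F (UniformSpace.Completion X) = Module.rank F X := by
  have hcont : 𝔠 ≤ 2 ^ κ := two_power_aleph0 ▸ power_le_power_left two_ne_zero hκ
  have hX : Module.rank F X = #X := Module.rank_eq_mk_of_aleph0_le_of_mk_le
    (h ▸ aleph0_le_continuum.trans hcont) (h ▸ (RCLike.mk_le_continuum F).trans hcont)
  refine le_antisymm ?_ (UniformSpace.Completion.rank_le_rank_completion F X)
  calc Module.rank F (UniformSpace.Completion X)
      ≤ #(UniformSpace.Completion X) := rank_le_card _ _
    _ ≤ #X ^ ℵ₀ :=
      mk_le_mk_pow_aleph0_of_denseRange (UniformSpace.Completion.denseRange_coe (α := X))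
    _ = Module.rank F X := by rw [← hX, h, ← power_mul, mul_aleph0_eq hκ]
end

section
/- Every infinite-dimensional Banach space over the field ℝ or ℂ has algebraic dimension at least 2^ℵ₀; in particular, there is no Banach space whose algebraic dimension equals ℵ₀. -/
/-!
Using Hahn–Banach against finite-dimensional subspaces and the fact that in an
infinite-dimensional space no finite-codimensional subspace lies in a finite-dimensional one,
one builds inductively a biorthogonal sequence `(xₙ, fₙ)` with `‖xₙ‖ = 1`. For `t ∈ (0, 1)` the
vector `v t = ∑ tⁿ xₙ` then satisfies `fₘ (v t) = tᵐ`, and the geometric sequences `(tᵐ)ₘ` for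
distinct `t` are linearly independent (as distinct characters of `ℕ`), so the `v t` are
`𝔠` linearly independent vectors.
-/

open Cardinal

theorem linearIndependent_pow_of_injective {ι K : Type*} [CommRing K] [IsDomain K] {a : ι → K}
    (ha : Function.Injective a) : LinearIndependent K (fun i (n : ℕ) => a i ^ n) := by
  have hchar := (linearIndependent_monoidHom (Multiplicative ℕ) K).comp _
    ((powersHom K).injective.comp ha)
  exact hchar.map' (LinearEquiv.funCongrLeft K K Multiplicative.ofAdd).toLinearMap
    (LinearEquiv.funCongrLeft K K Multiplicative.ofAdd).ker

theorem Submodule.not_le_of_finiteDimensional_quotient {K V : Type*} [DivisionRing K]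
    [AddCommGroup V] [Module K V] (h : ℵ₀ ≤ Module.rank K V) (p q : Submodule K V)
    [FiniteDimensional K p] [FiniteDimensional K (V ⧸ q)] : ¬ q ≤ p := by
  intro hle
  have hq : Module.rank K q < ℵ₀ := (Submodule.rank_mono hle).trans_lt (Module.rank_lt_aleph0 K p)
  rw [← Submodule.rank_quotient_add_rank q] at h
  exact h.not_gt (add_lt_aleph0 (Module.rank_lt_aleph0 K _) hq)

section Biorthogonal

variable {𝕜 X : Type*} [RCLike 𝕜] [NormedAddCommGroup X] [NormedSpace 𝕜 X]

theorem Submodule.exists_dual_eq_one_of_notMem (p : Submodule 𝕜 X) [FiniteDimensional 𝕜 p]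
    {x : X} (hx : x ∉ p) : ∃ f : StrongDual 𝕜 X, f x = 1 ∧ ∀ y ∈ p, f y = 0 := by
  have : IsClosed (p : Set X) := p.closed_of_finiteDimensional
  obtain ⟨g, hg⟩ := SeparatingDual.exists_eq_one (R := 𝕜) (x := p.mkQL x)
    (by simpa [Submodule.Quotient.mk_eq_zero] using hx)
  exact ⟨g.comp p.mkQL, hg, fun y hy => by simp [(Submodule.Quotient.mk_eq_zero p).2 hy]⟩

theorem exists_unit_dual_pair_annihilating_finset (h : ℵ₀ ≤ Module.rank 𝕜 X)
    (s : Finset (X × StrongDual 𝕜 X)) :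
    ∃ y : X × StrongDual 𝕜 X, (‖y.1‖ = 1 ∧ y.2 y.1 = 1) ∧ ∀ z ∈ s, z.2 y.1 = 0 ∧ y.2 z.1 = 0 := by
  let p := Submodule.span 𝕜 (Prod.fst '' (s : Set (X × StrongDual 𝕜 X)))
  have : FiniteDimensional 𝕜 p := FiniteDimensional.span_of_finite 𝕜 (s.finite_toSet.image _)
  let Φ : X →ₗ[𝕜] s → 𝕜 := LinearMap.pi fun z => (z.1.2 : X →ₗ[𝕜] 𝕜)
  have : FiniteDimensional 𝕜 (X ⧸ LinearMap.ker Φ) :=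
    Module.Finite.equiv Φ.quotKerEquivRange.symm
  obtain ⟨x, hxΦ, hxp⟩ := SetLike.not_le_iff_exists.1
    (Submodule.not_le_of_finiteDimensional_quotient h p (LinearMap.ker Φ))
  have hx0 : x ≠ 0 := by rintro rfl; exact hxp p.zero_mem
  have hc : (‖x‖⁻¹ : 𝕜) ≠ 0 := by simpa using hx0
  set y := (‖x‖⁻¹ : 𝕜) • x
  obtain ⟨g, hgy, hgp⟩ := p.exists_dual_eq_one_of_notMem ((p.smul_mem_iff hc).not.2 hxp)
  refine ⟨(y, g), ⟨norm_smul_inv_norm hx0, hgy⟩, fun z hz => ⟨?_, hgp _ ?_⟩⟩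
  · have hzx : z.2 x = 0 := congrFun (LinearMap.mem_ker.1 hxΦ) ⟨z, hz⟩
    simp [y, hzx]
  · exact Submodule.subset_span ⟨z, hz, rfl⟩

theorem exists_biorthogonal_seq (h : ℵ₀ ≤ Module.rank 𝕜 X) :
    ∃ (x : ℕ → X) (f : ℕ → StrongDual 𝕜 X), (∀ n, ‖x n‖ = 1) ∧ (∀ n, f n (x n) = 1) ∧
      Pairwise fun m n => f m (x n) = 0 := by
  obtain ⟨e, he, hrel⟩ := exists_seq_of_forall_finset_exists _ _
    fun s _ => exists_unit_dual_pair_annihilating_finset h s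
  refine ⟨fun n => (e n).1, fun n => (e n).2, fun n => (he n).1, fun n => (he n).2, ?_⟩
  intro m n hmn
  rcases hmn.lt_or_gt with hlt | hgt
  · exact (hrel m n hlt).1
  · exact (hrel n m hgt).2

end Biorthogonal

theorem apply_tsum_pow_smul_of_biorthogonal {𝕜 X : Type*} [NontriviallyNormedField 𝕜]
    [NormedAddCommGroup X] [NormedSpace 𝕜 X] [CompleteSpace X] {x : ℕ → X}
    {f : ℕ → StrongDual 𝕜 X} (hx : ∀ n, ‖x n‖ ≤ 1) (hfx : ∀ n, f n (x n) = 1)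
    (hfx' : Pairwise fun m n => f m (x n) = 0) {c : 𝕜} (hc : ‖c‖ < 1) (m : ℕ) :
    f m (∑' n, c ^ n • x n) = c ^ m := by
  have hsum : Summable fun n => c ^ n • x n :=
    .of_norm_bounded (summable_geometric_of_lt_one (norm_nonneg c) hc) fun n => by
      rw [norm_smul, norm_pow]
      exact mul_le_of_le_one_right (by positivity) (hx n)
  rw [(f m).map_tsum hsum, tsum_eq_single m fun n hn => by simp [hfx' (Ne.symm hn)]]
  simp [hfx]

theorem continuum_le_rank_of_biorthogonal {𝕜 X : Type*} [RCLike 𝕜]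
    [NormedAddCommGroup X] [NormedSpace 𝕜 X] [CompleteSpace X] {x : ℕ → X}
    {f : ℕ → StrongDual 𝕜 X} (hx : ∀ n, ‖x n‖ ≤ 1) (hfx : ∀ n, f n (x n) = 1)
    (hfx' : Pairwise fun m n => f m (x n) = 0) : 𝔠 ≤ Module.rank 𝕜 X := by
  let v : Set.Ioo (0 : ℝ) 1 → X := fun t => ∑' n, ((t : ℝ) : 𝕜) ^ n • x n
  let Φ : X →ₗ[𝕜] ℕ → 𝕜 := LinearMap.pi fun m => (f m : X →ₗ[𝕜] 𝕜)
  have hΦv : Φ ∘ v = fun (t : Set.Ioo (0 : ℝ) 1) (m : ℕ) => ((t : ℝ) : 𝕜) ^ m := by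
    ext t m
    have ht : ‖((t : ℝ) : 𝕜)‖ < 1 := by simpa [abs_of_pos t.2.1] using t.2.2
    exact apply_tsum_pow_smul_of_biorthogonal hx hfx hfx' ht m
  have hv : LinearIndependent 𝕜 v := .of_comp Φ <| hΦv ▸
    linearIndependent_pow_of_injective (RCLike.ofReal_injective.comp Subtype.val_injective)
  simpa [Cardinal.mk_Ioo_real zero_lt_one] using hv.cardinal_lift_le_rank

/-- Every infinite-dimensional Banach space over `F ∈ {ℝ, ℂ}` has algebraic
dimension at least `2 ^ ℵ₀`; in particular, no Banach space has algebraic dimension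
exactly `ℵ₀`. -/
theorem stmt4 (F : Type) [RCLike F] (X : Type) [NormedAddCommGroup X] [NormedSpace F X]
    [CompleteSpace X] :
    (ℵ₀ ≤ Module.rank F X → Cardinal.continuum ≤ Module.rank F X) ∧
    Module.rank F X ≠ ℵ₀ := by
  have hcontinuum : ℵ₀ ≤ Module.rank F X → 𝔠 ≤ Module.rank F X := fun h => by
    obtain ⟨x, f, hx, hfx, hfx'⟩ := exists_biorthogonal_seq h
    exact continuum_le_rank_of_biorthogonal (fun n => (hx n).le) hfx hfx'
  refine ⟨hcontinuum, fun h => ?_⟩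
  have := hcontinuum h.ge
  rw [h] at this
  exact aleph0_lt_continuum.not_ge this
end

section
/- Every infinite-dimensional separable Banach space over the field ℝ or ℂ has algebraic dimension exactly 2^ℵ₀. -/
/-!
The upper bound is cardinality: every point of a separable metric space is the limit of a sequence
in a fixed countable dense set, so `rank ≤ #X ≤ ℵ₀ ^ ℵ₀ = 𝔠`.

For the lower bound, Hahn–Banach yields a normalized biorthogonal sequence `(uₙ, fₙ)`,
`fₘ uₙ = δₘₙ`, in any infinite-dimensional normed space. For `‖t‖ < 1` the vector `xₜ = ∑ tⁿ uₙ`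
then satisfies `fₘ xₜ = tᵐ`, so the map `x ↦ (fₘ x)ₘ` sends the family `(xₜ)` to the sequences
`(tⁿ)ₙ`, which are linearly independent as distinct characters of the monoid `ℕ`. The unit ball of
the scalar field has cardinality `𝔠`.
-/

open Cardinal Filter Topology

theorem Cardinal.mk_le_continuum_of_separableSpace (X : Type*) [TopologicalSpace X]
    [FrechetUrysohnSpace X] [T2Space X] [TopologicalSpace.SeparableSpace X] : #X ≤ 𝔠 := by
  obtain ⟨s, hsc, hsd⟩ := TopologicalSpace.exists_countable_dense X
  have : Countable s := hsc.to_subtype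
  have hseq (x : X) : ∃ u : ℕ → s, Tendsto (fun n => (u n : X)) atTop (𝓝 x) := by
    obtain ⟨u, hu, hlim⟩ := mem_closure_iff_seq_limit.mp (hsd x)
    exact ⟨fun n => ⟨u n, hu n⟩, hlim⟩
  choose u hu using hseq
  have hinj : Function.Injective u := fun x y hxy =>
    tendsto_nhds_unique (hu x) (hxy ▸ hu y)
  calc #X ≤ #(ℕ → s) := mk_le_of_injective hinj
    _ = #s ^ ℵ₀ := by simp
    _ ≤ ℵ₀ ^ ℵ₀ := power_le_power_right mk_le_aleph0
    _ = 𝔠 := aleph0_power_aleph0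

theorem exists_mem_ker_notMem_of_not_finiteDimensional {K E ι : Type*} [Field K] [AddCommGroup E]
    [Module K E] [Finite ι] (hE : ¬ FiniteDimensional K E) (Φ : E →ₗ[K] ι → K)
    (V : Submodule K E) [FiniteDimensional K V] : ∃ y ∈ LinearMap.ker Φ, y ∉ V := by
  by_contra! hker
  have : FiniteDimensional K (LinearMap.ker Φ) := Submodule.finiteDimensional_of_le hker
  refine hE (Module.rank_lt_aleph0_iff.mp (lift_lt_aleph0.mp ?_))
  rw [← LinearMap.lift_rank_range_add_rank_ker Φ]
  exact add_lt_aleph0 (lift_lt_aleph0.mpr (Module.rank_lt_aleph0 K _))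
    (lift_lt_aleph0.mpr (Module.rank_lt_aleph0 K _))

theorem linearIndependent_pow_seq (K : Type*) [CommRing K] [IsDomain K] :
    LinearIndependent K (fun (t : K) (n : ℕ) => t ^ n) :=
  (linearIndependent_monoidHom (Multiplicative ℕ) K).comp (powersHom K) (powersHom K).injective

section Normed

variable {𝕜 E : Type*} [RCLike 𝕜] [NormedAddCommGroup E] [NormedSpace 𝕜 E]

theorem Submodule.exists_strongDual_eq_one_of_notMem {S : Submodule 𝕜 E}
    (hS : IsClosed (S : Set E)) {x : E} (hx : x ∉ S) :
    ∃ f : StrongDual 𝕜 E, f x = 1 ∧ ∀ y ∈ S, f y = 0 := by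
  have : IsClosed (S : Set E) := hS
  obtain ⟨g, hg⟩ := SeparatingDual.exists_eq_one (R := 𝕜) (x := S.mkQL x)
    (by simpa [Submodule.Quotient.mk_eq_zero] using hx)
  exact ⟨g.comp S.mkQL, hg, fun y hy => by simp [(Submodule.Quotient.mk_eq_zero S).2 hy]⟩

theorem exists_biorthogonal_pair_of_finset (h : ¬ FiniteDimensional 𝕜 E)
    (s : Finset (E × StrongDual 𝕜 E)) :
    ∃ x : E, ∃ g : StrongDual 𝕜 E,
      ‖x‖ = 1 ∧ g x = 1 ∧ ∀ q ∈ s, q.2 x = 0 ∧ g q.1 = 0 := by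
  let V := Submodule.span 𝕜 (Prod.fst '' (s : Set (E × StrongDual 𝕜 E)))
  have : FiniteDimensional 𝕜 V := FiniteDimensional.span_of_finite 𝕜 (s.finite_toSet.image _)
  let Φ : E →ₗ[𝕜] s → 𝕜 := LinearMap.pi fun q => (q.1.2 : E →ₗ[𝕜] 𝕜)
  obtain ⟨y, hyΦ, hyV⟩ := exists_mem_ker_notMem_of_not_finiteDimensional h Φ V
  have hy0 : y ≠ 0 := fun hy => hyV (hy ▸ V.zero_mem)
  have hxV : (‖y‖⁻¹ : 𝕜) • y ∉ V := by
    rwa [Submodule.smul_mem_iff _ (by simpa using hy0)]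
  obtain ⟨g, hgx, hgV⟩ :=
    Submodule.exists_strongDual_eq_one_of_notMem (Submodule.closed_of_finiteDimensional V) hxV
  refine ⟨(‖y‖⁻¹ : 𝕜) • y, g, norm_smul_inv_norm hy0, hgx, fun q hq =>
    ⟨?_, hgV _ (Submodule.subset_span ⟨q, hq, rfl⟩)⟩⟩
  have hqy : q.2 y = 0 := congrFun hyΦ ⟨q, hq⟩
  simp [hqy]

theorem exists_biorthogonal_seq_s5 (h : ¬ FiniteDimensional 𝕜 E) :
    ∃ (u : ℕ → E) (f : ℕ → StrongDual 𝕜 E),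
      (∀ n, ‖u n‖ = 1) ∧ ∀ m n, f m (u n) = if m = n then 1 else 0 := by
  obtain ⟨p, hp, hpr⟩ := exists_seq_of_forall_finset_exists
    (fun q : E × StrongDual 𝕜 E => ‖q.1‖ = 1 ∧ q.2 q.1 = 1)
    (fun q q' => q.2 q'.1 = 0 ∧ q'.2 q.1 = 0) fun s _ => by
      obtain ⟨x, g, hx, hgx, hs⟩ := exists_biorthogonal_pair_of_finset h s
      exact ⟨(x, g), ⟨hx, hgx⟩, hs⟩
  refine ⟨fun n => (p n).1, fun n => (p n).2, fun n => (hp n).1, fun m n => ?_⟩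
  rcases lt_trichotomy m n with hmn | rfl | hmn
  · simp [(hpr m n hmn).1, hmn.ne]
  · simp [(hp m).2]
  · simp [(hpr n m hmn).2, hmn.ne']

variable [CompleteSpace E] {u : ℕ → E}

theorem summable_pow_smul_of_norm_le_one (hu : ∀ n, ‖u n‖ ≤ 1) {t : 𝕜} (ht : ‖t‖ < 1) :
    Summable fun n => t ^ n • u n :=
  .of_norm_bounded (summable_geometric_of_lt_one (norm_nonneg t) ht) fun n => by
    rw [norm_smul, norm_pow]
    exact mul_le_of_le_one_right (by positivity) (hu n)

theorem linearIndependent_tsum_pow_smul {f : ℕ → StrongDual 𝕜 E} (hu : ∀ n, ‖u n‖ ≤ 1)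
    (huf : ∀ m n, f m (u n) = if m = n then 1 else 0) :
    LinearIndependent 𝕜 fun t : Metric.ball (0 : 𝕜) 1 => ∑' n, (t : 𝕜) ^ n • u n := by
  let Φ : E →ₗ[𝕜] ℕ → 𝕜 := LinearMap.pi fun m => (f m : E →ₗ[𝕜] 𝕜)
  have hΦ : Φ ∘ (fun t : Metric.ball (0 : 𝕜) 1 => ∑' n, (t : 𝕜) ^ n • u n) =
      (fun (t : 𝕜) (n : ℕ) => t ^ n) ∘ Subtype.val := by
    ext t m
    have ht : ‖(t : 𝕜)‖ < 1 := mem_ball_zero_iff.mp t.2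
    simp [Φ, (f m).map_tsum (summable_pow_smul_of_norm_le_one hu ht), huf]
  exact .of_comp Φ (hΦ ▸ (linearIndependent_pow_seq 𝕜).comp _ Subtype.val_injective)

theorem continuum_le_rank_of_not_finiteDimensional (h : ¬ FiniteDimensional 𝕜 E) :
    𝔠 ≤ Module.rank 𝕜 E := by
  obtain ⟨u, f, hu, huf⟩ := exists_biorthogonal_seq_s5 h
  have hind := linearIndependent_tsum_pow_smul (fun n => (hu n).le) huf
  have hball : 𝔠 ≤ #(Metric.ball (0 : 𝕜) 1) :=
    continuum_le_cardinal_of_isOpen 𝕜 Metric.isOpen_ball ⟨0, by simp⟩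
  simpa using (lift_le.mpr hball).trans hind.cardinal_lift_le_rank

end Normed

/-- Every infinite-dimensional separable Banach space over `F ∈ {ℝ, ℂ}` has
algebraic dimension exactly `2 ^ ℵ₀` (the cardinality of the continuum). -/
theorem stmt5 (F : Type) [RCLike F] (X : Type) [NormedAddCommGroup X] [NormedSpace F X]
    [CompleteSpace X] [TopologicalSpace.SeparableSpace X]
    (h : ℵ₀ ≤ Module.rank F X) :
    Module.rank F X = Cardinal.continuum :=
  le_antisymm ((rank_le_card F X).trans (mk_le_continuum_of_separableSpace X))
    (continuum_le_rank_of_not_finiteDimensional fun _ => h.not_gt (Module.rank_lt_aleph0 F X))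
end

section
/- Let F be the field ℝ or ℂ and let V be an F-vector space whose algebraic dimension is at least 2^ℵ₀. Then the set 𝒵(V) of all linear subspaces Z ≤ V with dim Z = dim V and dim(V/Z) < ℵ₀ has cardinality 2^|V|, which is strictly greater than |V| = dim V. -/
/-!
Since `#F = 𝔠 ≤ dim V`, a Hamel basis `(b i)_{i ∈ ι}` gives `|V| = |ι →₀ F| = |ι| = dim V`.
The bound `|𝒵(V)| ≤ |Set V| = 2 ^ |V|` is trivial. Conversely, every hyperplane has finite
codimension and, `V` being infinite-dimensional, full dimension; and a linear functional
normalised by `f (b i₀) = 1` is determined by its kernel. Prescribing the values of `f` on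
the remaining basis vectors arbitrarily therefore yields `|F| ^ |ι| ≥ 2 ^ |V|` distinct
hyperplanes.
-/

open Cardinal

universe u

lemma RCLike.mk_eq_continuum (F : Type) [RCLike F] : #F = 𝔠 := by
  refine le_antisymm ?_ ?_
  · have hinj : Function.Injective fun z : F => (RCLike.re z, RCLike.im z) :=
      fun _ _ h => RCLike.ext (Prod.ext_iff.mp h).1 (Prod.ext_iff.mp h).2
    calc #F ≤ #(ℝ × ℝ) := mk_le_of_injective hinj
      _ = 𝔠 := by simp [mk_real]
  · calc 𝔠 = #ℝ := mk_real.symm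
      _ ≤ #F := mk_le_of_injective (algebraMap ℝ F).injective

lemma Module.mk_eq_rank_of_mk_le_rank {R M : Type u} [Ring R] [StrongRankCondition R]
    [AddCommGroup M] [Module R M] [Module.Free R M]
    (hM : ℵ₀ ≤ Module.rank R M) (hR : #R ≤ Module.rank R M) : #M = Module.rank R M := by
  have : Nontrivial R := nontrivial_of_invariantBasisNumber R
  let b := Module.Free.chooseBasis R M
  have hι : #(Module.Free.ChooseBasisIndex R M) = Module.rank R M := b.mk_eq_rank''
  have : Infinite (Module.Free.ChooseBasisIndex R M) := infinite_iff.mpr (hι ▸ hM)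
  rw [mk_congr b.repr.toEquiv, mk_finsupp_of_infinite, hι, max_eq_left hR]

lemma Submodule.rank_eq_of_rank_quotient_lt_aleph0 {K V : Type*} [DivisionRing K]
    [AddCommGroup V] [Module K V] (hV : ℵ₀ ≤ Module.rank K V) (Z : Submodule K V)
    (hZ : Module.rank K (V ⧸ Z) < ℵ₀) : Module.rank K Z = Module.rank K V := by
  have hsum := Z.rank_quotient_add_rank
  have hZinf : ℵ₀ ≤ Module.rank K Z := by
    by_contra! hfin
    exact (add_lt_aleph0 hZ hfin).not_ge (hsum ▸ hV)
  rwa [add_eq_right hZinf (hZ.le.trans hZinf)] at hsum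

lemma LinearMap.rank_quotient_ker_lt_aleph0 {K V : Type u} [DivisionRing K]
    [AddCommGroup V] [Module K V] (f : V →ₗ[K] K) :
    Module.rank K (V ⧸ LinearMap.ker f) < ℵ₀ := by
  rw [f.quotKerEquivRange.rank_eq]
  exact Module.rank_lt_aleph0 K _

lemma LinearMap.eq_of_ker_eq_of_apply_eq_one {R M : Type*} [Ring R] [AddCommGroup M]
    [Module R M] {f g : M →ₗ[R] R} {x : M} (h : LinearMap.ker f = LinearMap.ker g)
    (hf : f x = 1) (hg : g x = 1) : f = g := by
  ext w
  have hmem : w - f w • x ∈ LinearMap.ker g := by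
    rw [← h, LinearMap.mem_ker]
    simp [hf]
  have hdiff : g w - f w = 0 := by simpa [hg] using hmem
  exact (sub_eq_zero.mp hdiff).symm

-- The paper's `𝒵(V)`.
def fullRankFiniteCodim (K V : Type*) [DivisionRing K] [AddCommGroup V] [Module K V] :
    Set (Submodule K V) :=
  {Z | Module.rank K Z = Module.rank K V ∧ Module.rank K (V ⧸ Z) < ℵ₀}

section Hyperplanes

variable {K V ι : Type u} [Field K] [AddCommGroup V] [Module K V]

lemma Module.Basis.injective_ker_constr (b : Module.Basis ι K V) {i₀ : ι} {α : Type*}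
    {φ : α → ι → K} (hφ : Function.Injective φ) (h₀ : ∀ a, φ a i₀ = 1) :
    Function.Injective fun a => LinearMap.ker (b.constr K (φ a)) := by
  intro a a' hker
  refine hφ (funext fun i => ?_)
  have hfun := LinearMap.eq_of_ker_eq_of_apply_eq_one hker
    (by rw [b.constr_basis, h₀]) (by rw [b.constr_basis, h₀])
  simpa using LinearMap.congr_fun hfun (b i)

lemma two_pow_rank_le_mk_fullRankFiniteCodim (hV : ℵ₀ ≤ Module.rank K V) :
    2 ^ Module.rank K V ≤ #(fullRankFiniteCodim K V) := by
  classical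
  let b := Module.Basis.ofVectorSpace K V
  have hι : #(Module.Basis.ofVectorSpaceIndex K V) = Module.rank K V := b.mk_eq_rank''
  have : Infinite (Module.Basis.ofVectorSpaceIndex K V) := infinite_iff.mpr (hι ▸ hV)
  obtain ⟨i₀⟩ : Nonempty (Module.Basis.ofVectorSpaceIndex K V) := inferInstance
  let J : Set (Module.Basis.ofVectorSpaceIndex K V) := {i₀}ᶜ
  have hJ : #J = Module.rank K V := by
    rw [← hι]
    refine mk_compl_of_infinite _ ?_
    rw [mk_singleton]
    exact one_lt_aleph0.trans_le (infinite_iff.mp ‹_›)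
  let φ : (J → K) → Module.Basis.ofVectorSpaceIndex K V → K :=
    fun c i => if h : i = i₀ then 1 else c ⟨i, h⟩
  have hφ : Function.Injective φ := fun c c' hcc' => funext fun j => by
    simpa [φ, Set.mem_compl_singleton_iff.mp j.2] using congrFun hcc' j
  have hmem (c : J → K) : LinearMap.ker (b.constr K (φ c)) ∈ fullRankFiniteCodim K V := by
    have hcodim := (b.constr K (φ c)).rank_quotient_ker_lt_aleph0
    exact ⟨Submodule.rank_eq_of_rank_quotient_lt_aleph0 hV _ hcodim, hcodim⟩
  calc 2 ^ Module.rank K V = 2 ^ #J := by rw [hJ]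
    _ ≤ #K ^ #J := power_le_power_right (two_le_iff.mpr ⟨0, 1, zero_ne_one⟩)
    _ = #(J → K) := (power_def _ _).symm
    _ ≤ #(fullRankFiniteCodim K V) :=
      mk_le_of_injective (f := fun c => ⟨_, hmem c⟩) fun c c' h =>
        b.injective_ker_constr hφ (fun _ => dif_pos rfl) (congrArg Subtype.val h)

theorem mk_fullRankFiniteCodim_eq (hV : ℵ₀ ≤ Module.rank K V) (hK : #K ≤ Module.rank K V) :
    #(fullRankFiniteCodim K V) = 2 ^ #V := by
  refine le_antisymm ?_ ?_
  · calc #(fullRankFiniteCodim K V) ≤ #(Submodule K V) := mk_subtype_le _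
      _ ≤ #(Set V) := mk_le_of_injective SetLike.coe_injective
      _ = 2 ^ #V := mk_set
  · rw [Module.mk_eq_rank_of_mk_le_rank hV hK]
    exact two_pow_rank_le_mk_fullRankFiniteCodim hV

end Hyperplanes

/-- If `V` is a vector space over `F ∈ {ℝ, ℂ}` of algebraic dimension at
least `2 ^ ℵ₀`, then the set `𝒵(V)` of linear subspaces `Z ≤ V` of full algebraic
dimension and finite codimension has cardinality `2 ^ |V|`, which is strictly greater
than `|V| = dim V`. -/
theorem stmt8 (F : Type) [RCLike F] (V : Type) [AddCommGroup V] [Module F V]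
    (h : Cardinal.continuum ≤ Module.rank F V) :
    #{Z : Submodule F V //
        Module.rank F Z = Module.rank F V ∧ Module.rank F (V ⧸ Z) < ℵ₀} = 2 ^ #V ∧
    #V < 2 ^ #V ∧ (#V : Cardinal) = Module.rank F V := by
  have hV : ℵ₀ ≤ Module.rank F V := aleph0_le_continuum.trans h
  have hF : #F ≤ Module.rank F V := (RCLike.mk_eq_continuum F).trans_le h
  exact ⟨mk_fullRankFiniteCodim_eq hV hF, cantor _, Module.mk_eq_rank_of_mk_le_rank hV hF⟩
end
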